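/- Let X ∈ ℝ^{k×p} and T ∈ ℝ^{n×k} with ⟨T, T(XXᵀ)⟩ ≠ 0. Define the spectral (Barzilai–Borwein) stepsizes α^{BB1} = (1/2)·⟨T,T⟩ / ⟨T, T(XXᵀ)⟩ and α^{BB2} = (1/2)·⟨T, T(XXᵀ)⟩ / ⟨T(XXᵀ), T(XXᵀ)⟩. Then 1/(2‖XXᵀ‖₂) ≤ α^{BB2} ≤ min{ α^{BB1}, 1/(2σ_min²(X)) }, where σ_min(X) denotes the smallest nonzero singular value of X. -/

import Mathlib

open Matrix

noncomputable def specNorm {α β : Type*} [Fintype α] [Fintype β] [DecidableEq β]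
    (A : Matrix α β ℝ) : ℝ :=
  ‖LinearMap.toContinuousLinearMap (Matrix.toEuclideanLin A)‖

/-!
Diagonalise `A = XXᵀ = U diag(λ) Uᵀ` and weigh each eigenvector `uᵢ` by `wᵢ = ‖T uᵢ‖² ≥ 0`.
Then `⟨T, T⟩ = ∑ wᵢ`, `⟨T, TA⟩ = ∑ λᵢ wᵢ` and `‖TA‖² = ∑ λᵢ² wᵢ`, so `α^{BB2} = ½ ∑ λw / ∑ λ²w`.
Cauchy–Schwarz for the weights `w` gives `(∑ λw)² ≤ ∑ w · ∑ λ²w`, i.e. `α^{BB2} ≤ α^{BB1}`;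
comparing term by term with `0 ≤ λᵢ ≤ ‖A‖₂` and `λᵢ ∈ {0} ∪ [σ², ∞)` gives
`σ² ∑ λw ≤ ∑ λ²w ≤ ‖A‖₂ ∑ λw`, which are the two remaining bounds.
-/

namespace Matrix

variable {m k l : Type*} [Fintype m] [Fintype k] [Fintype l]

theorem trace_transpose_mul_mul_diagonal_conj [DecidableEq l] (T : Matrix m k ℝ)
    (U : Matrix k l ℝ) (d : l → ℝ) :
    (Tᵀ * (T * (U * diagonal d * Uᵀ))).trace = ∑ i, d i * ∑ j, (T * U) j i ^ 2 := by
  have hcyc : (Tᵀ * (T * (U * diagonal d * Uᵀ))).trace =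
      ((T * U)ᵀ * (T * U) * diagonal d).trace := by
    rw [show Tᵀ * (T * (U * diagonal d * Uᵀ)) = (Tᵀ * T * U * diagonal d) * Uᵀ by
      simp only [Matrix.mul_assoc], trace_mul_comm, transpose_mul]
    simp only [Matrix.mul_assoc]
  rw [hcyc]
  simp only [trace, diag, mul_diagonal, mul_apply (M := (T * U)ᵀ), transpose_apply, sq]
  exact Finset.sum_congr rfl fun i _ => by
    rw [Finset.mul_sum, Finset.sum_mul]
    simp only [mul_comm]

variable [DecidableEq k] {A : Matrix k k ℝ}

namespace IsHermitian

theorem pow_eq_diagonal_conj (hA : A.IsHermitian) (j : ℕ) :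
    A ^ j = (hA.eigenvectorUnitary : Matrix k k ℝ) * diagonal (hA.eigenvalues ^ j) *
      (hA.eigenvectorUnitary : Matrix k k ℝ)ᵀ := by
  conv_lhs => rw [hA.spectral_theorem]
  rw [← map_pow, diagonal_pow]
  simp [Unitary.conjStarAlgAut_apply, star_eq_conjTranspose]

/-- `eigenWeight hA T i = ‖T vᵢ‖²` for the `i`-th orthonormal eigenvector `vᵢ` of `A`. -/
noncomputable def eigenWeight (hA : A.IsHermitian) (T : Matrix m k ℝ) (i : k) : ℝ :=
  ∑ j, (T * (hA.eigenvectorUnitary : Matrix k k ℝ)) j i ^ 2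

theorem eigenWeight_nonneg (hA : A.IsHermitian) (T : Matrix m k ℝ) (i : k) :
    0 ≤ hA.eigenWeight T i :=
  Finset.sum_nonneg fun _ _ => sq_nonneg _

theorem trace_transpose_mul_mul_pow (hA : A.IsHermitian) (T : Matrix m k ℝ) (j : ℕ) :
    (Tᵀ * (T * A ^ j)).trace = ∑ i, hA.eigenvalues i ^ j * hA.eigenWeight T i := by
  rw [hA.pow_eq_diagonal_conj, trace_transpose_mul_mul_diagonal_conj]
  rfl

theorem trace_transpose_mul_self (hA : A.IsHermitian) (T : Matrix m k ℝ) :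
    (Tᵀ * T).trace = ∑ i, hA.eigenWeight T i := by
  simpa using hA.trace_transpose_mul_mul_pow T 0

theorem trace_transpose_mul_mul (hA : A.IsHermitian) (T : Matrix m k ℝ) :
    (Tᵀ * (T * A)).trace = ∑ i, hA.eigenvalues i * hA.eigenWeight T i := by
  simpa using hA.trace_transpose_mul_mul_pow T 1

theorem trace_transpose_mul_mul_self_eq (hA : A.IsHermitian) (T : Matrix m k ℝ) :
    ((T * A)ᵀ * (T * A)).trace = (Tᵀ * (T * A ^ 2)).trace := by
  rw [transpose_mul, (isHermitian_iff_isSymm.mp hA).eq, Matrix.mul_assoc, trace_mul_comm, sq]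
  simp only [Matrix.mul_assoc]

theorem eigenvalues_le_specNorm (hA : A.IsHermitian) (i : k) :
    hA.eigenvalues i ≤ specNorm A := by
  set L := LinearMap.toContinuousLinearMap (toEuclideanLin A)
  have hv : L (hA.eigenvectorBasis i) = hA.eigenvalues i • hA.eigenvectorBasis i := by
    apply (WithLp.equiv 2 (k → ℝ)).injective
    simpa [L] using hA.mulVec_eigenvectorBasis i
  have := L.le_opNorm (hA.eigenvectorBasis i)
  rw [hv, norm_smul, hA.eigenvectorBasis.orthonormal.1 i, mul_one, mul_one] at this
  exact (le_abs_self _).trans this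

theorem sq_trace_transpose_mul_mul_le (hA : A.IsHermitian) (T : Matrix m k ℝ) :
    (Tᵀ * (T * A)).trace ^ 2 ≤ (Tᵀ * T).trace * (Tᵀ * (T * A ^ 2)).trace := by
  rw [hA.trace_transpose_mul_self, hA.trace_transpose_mul_mul, hA.trace_transpose_mul_mul_pow]
  refine Finset.sum_sq_le_sum_mul_sum_of_sq_le_mul _ (fun i _ => hA.eigenWeight_nonneg T i)
    (fun i _ => mul_nonneg (sq_nonneg _) (hA.eigenWeight_nonneg T i)) fun i _ => le_of_eq (by ring)

end IsHermitian

namespace PosSemidef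

theorem trace_transpose_mul_mul_nonneg (hA : A.PosSemidef) (T : Matrix m k ℝ) :
    0 ≤ (Tᵀ * (T * A)).trace := by
  rw [hA.1.trace_transpose_mul_mul]
  exact Finset.sum_nonneg fun i _ =>
    mul_nonneg (hA.eigenvalues_nonneg i) (hA.1.eigenWeight_nonneg T i)

theorem mul_trace_transpose_mul_mul_le (hA : A.PosSemidef) (T : Matrix m k ℝ) {s : ℝ}
    (hs : ∀ i, hA.1.eigenvalues i ≠ 0 → s ≤ hA.1.eigenvalues i) :
    s * (Tᵀ * (T * A)).trace ≤ (Tᵀ * (T * A ^ 2)).trace := by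
  rw [hA.1.trace_transpose_mul_mul, hA.1.trace_transpose_mul_mul_pow, Finset.mul_sum]
  refine Finset.sum_le_sum fun i _ => ?_
  rcases eq_or_ne (hA.1.eigenvalues i) 0 with h | h
  · simp [h]
  · have := mul_le_mul_of_nonneg_left (hs i h) (hA.eigenvalues_nonneg i)
    nlinarith [hA.1.eigenWeight_nonneg T i]

theorem trace_transpose_mul_mul_sq_le (hA : A.PosSemidef) (T : Matrix m k ℝ) :
    (Tᵀ * (T * A ^ 2)).trace ≤ specNorm A * (Tᵀ * (T * A)).trace := by
  rw [hA.1.trace_transpose_mul_mul, hA.1.trace_transpose_mul_mul_pow, Finset.mul_sum]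
  refine Finset.sum_le_sum fun i _ => ?_
  rw [sq, mul_assoc]
  exact mul_le_mul_of_nonneg_right (hA.1.eigenvalues_le_specNorm i)
    (mul_nonneg (hA.eigenvalues_nonneg i) (hA.1.eigenWeight_nonneg T i))

end PosSemidef

end Matrix

theorem bb_stepsize_bounds_D_general
    {n k p : ℕ} (X : Matrix (Fin k) (Fin p) ℝ) (T : Matrix (Fin n) (Fin k) ℝ)
    (hX : (X * Xᵀ).IsHermitian)
    (σmin : ℝ) (hσpos : 0 < σmin)
    (hσmin : ∀ i, hX.eigenvalues i ≠ 0 → σmin ^ 2 ≤ hX.eigenvalues i)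
    (hT : (Tᵀ * (T * (X * Xᵀ))).trace ≠ 0)
    (αBB1 αBB2 : ℝ)
    (h1 : αBB1 = (1 / 2) * (Tᵀ * T).trace / (Tᵀ * (T * (X * Xᵀ))).trace)
    (h2 : αBB2 = (1 / 2) * (Tᵀ * (T * (X * Xᵀ))).trace /
      ((T * (X * Xᵀ))ᵀ * (T * (X * Xᵀ))).trace) :
    1 / (2 * specNorm (X * Xᵀ)) ≤ αBB2 ∧ αBB2 ≤ min αBB1 (1 / (2 * σmin ^ 2)) := by
  have hA : (X * Xᵀ).PosSemidef := posSemidef_self_mul_conjTranspose X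
  rw [hX.trace_transpose_mul_mul_self_eq] at h2
  set a := (Tᵀ * T).trace
  set b := (Tᵀ * (T * (X * Xᵀ))).trace
  set c := (Tᵀ * (T * (X * Xᵀ) ^ 2)).trace
  have hb : 0 < b := (hA.trace_transpose_mul_mul_nonneg T).lt_of_ne' hT
  have hac : b ^ 2 ≤ a * c := hX.sq_trace_transpose_mul_mul_le T
  have hσc : σmin ^ 2 * b ≤ c := hA.mul_trace_transpose_mul_mul_le T hσmin
  have hcN : c ≤ specNorm (X * Xᵀ) * b := hA.trace_transpose_mul_mul_sq_le T
  have hc : 0 < c := lt_of_lt_of_le (by positivity) hσc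
  have hN : 0 < specNorm (X * Xᵀ) := pos_of_mul_pos_left (hc.trans_le hcN) hb.le
  subst h1 h2
  refine ⟨?_, le_min ?_ ?_⟩
  · rw [div_le_div_iff₀ (by positivity) (by positivity)]
    linarith
  · rw [div_le_div_iff₀ (by positivity) hb]
    nlinarith
  · rw [div_le_div_iff₀ (by positivity) (by positivity)]
    linarith

/-- Bounds on the Barzilai–Borwein stepsizes for the `D`-block of the DL problem:
`1/(2‖XXᵀ‖₂) ≤ α^{BB2} ≤ min{α^{BB1}, 1/(2 σ_min²(X))}`, where `σ_min(X)` is the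
smallest nonzero singular value of `X`. -/
theorem bb_stepsize_bounds_D
    {n k p : ℕ} (X : Matrix (Fin k) (Fin p) ℝ) (T : Matrix (Fin n) (Fin k) ℝ)
    (hX : (X * Xᵀ).IsHermitian)
    (σmin : ℝ) (hσpos : 0 < σmin)
    (hσeig : ∃ i, hX.eigenvalues i = σmin ^ 2)
    (hσmin : ∀ i, hX.eigenvalues i ≠ 0 → σmin ^ 2 ≤ hX.eigenvalues i)
    (hT : (Tᵀ * (T * (X * Xᵀ))).trace ≠ 0)
    (αBB1 αBB2 : ℝ)
    (h1 : αBB1 = (1 / 2) * (Tᵀ * T).trace / (Tᵀ * (T * (X * Xᵀ))).trace)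
    (h2 : αBB2 = (1 / 2) * (Tᵀ * (T * (X * Xᵀ))).trace /
      ((T * (X * Xᵀ))ᵀ * (T * (X * Xᵀ))).trace) :
    1 / (2 * specNorm (X * Xᵀ)) ≤ αBB2 ∧ αBB2 ≤ min αBB1 (1 / (2 * σmin ^ 2)) :=
  bb_stepsize_bounds_D_general X T hX σmin hσpos hσmin hT αBB1 αBB2 h1 h2
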